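/- arXiv:2509.09177 — 2 statements merged into one kernel-verified Lean document; each statement's English description precedes it below -/
import Mathlib

section
/- Let (Ω, P) be a probability space, L : Ω → ℕ a random length, g⋆(l) and g_b(l) vectors in a real inner product space for each l, and q(l) ∈ [0,1]. Set q̄ = E[q(L)] > 0, g⋆ = E[g⋆(L)], g_b = E[q(L)·g_b(L)], and LRE = (1/2)·E[|q(L)/q̄ − 1|]. If ‖g_b(l) − g⋆(l)‖ ≤ η·‖g⋆(l)‖ for all l with η ∈ [0,1), and E[|q(L) − q̄|·‖g⋆(L)‖] ≤ γ·E[|q(L) − q̄|]·E[‖g⋆(L)‖], then ‖g_b − q̄·g⋆‖ ≤ q̄·(2γ(1+η)·LRE + η)·E[‖g⋆(L)‖]. -/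
/-!
Pointwise, `q • g_b − q̄ • g⋆ = q • (g_b − g⋆) + (q − q̄) • g⋆`, and since `0 ≤ q ≤ |q − q̄| + q̄`
the first term costs at most `η (|q − q̄| + q̄) ‖g⋆‖`. Integrating, the deviation is bounded by
`(1 + η) E[|q − q̄| ‖g⋆‖] + η q̄ E‖g⋆‖`; the correlation hypothesis factors the first expectation,
and `E|q − q̄| = 2 q̄ LRE`.
-/

open MeasureTheory

section

variable {Ω E : Type*} [MeasurableSpace Ω] {μ : Measure Ω} [NormedAddCommGroup E]

theorem MeasureTheory.Integrable.abs_sub_const_mul_norm {f : Ω → E} {w : Ω → ℝ} {C : ℝ}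
    (hf : Integrable f μ) (hw : AEStronglyMeasurable w μ) (hwC : ∀ᵐ ω ∂μ, |w ω| ≤ C) (c : ℝ) :
    Integrable (fun ω => |w ω - c| * ‖f ω‖) μ := by
  have hdev : AEStronglyMeasurable (fun ω => |w ω - c|) μ :=
    continuous_abs.comp_aestronglyMeasurable (hw.sub aestronglyMeasurable_const)
  refine hf.norm.bdd_mul (c := C + |c|) hdev ?_
  filter_upwards [hwC] with ω hω
  rw [Real.norm_eq_abs, abs_abs]
  exact (abs_sub _ _).trans (by linarith)

theorem integral_abs_div_sub_one {w : Ω → ℝ} {c : ℝ} (hc : c ≠ 0) :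
    ∫ ω, |w ω / c - 1| ∂μ = (∫ ω, |w ω - c| ∂μ) / |c| := by
  simp_rw [← integral_div, ← abs_div, sub_div, div_self hc]

variable [NormedSpace ℝ E]

theorem norm_smul_sub_smul_le_of_norm_sub_le {w c η : ℝ} {a b : E} (hw : 0 ≤ w)
    (hb : ‖b - a‖ ≤ η * ‖a‖) :
    ‖w • b - c • a‖ ≤ (1 + η) * (|w - c| * ‖a‖) + η * c * ‖a‖ := by
  have hsplit : w • b - c • a = w • (b - a) + (w - c) • a := by
    rw [smul_sub, sub_smul]; abel
  have hw_le : w ≤ |w - c| + c := by linarith [le_abs_self (w - c)]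
  have hηa : 0 ≤ η * ‖a‖ := (norm_nonneg _).trans hb
  calc ‖w • b - c • a‖ ≤ w * ‖b - a‖ + |w - c| * ‖a‖ := by
        rw [hsplit]
        refine (norm_add_le _ _).trans_eq ?_
        rw [norm_smul, norm_smul, Real.norm_of_nonneg hw, Real.norm_eq_abs]
    _ ≤ (|w - c| + c) * (η * ‖a‖) + |w - c| * ‖a‖ := by
        have := (mul_le_mul_of_nonneg_left hb hw).trans (mul_le_mul_of_nonneg_right hw_le hηa)
        linarith
    _ = (1 + η) * (|w - c| * ‖a‖) + η * c * ‖a‖ := by ring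

theorem norm_integral_smul_sub_smul_integral_le {f g : Ω → E} {w : Ω → ℝ} {c η : ℝ}
    (hf : Integrable f μ) (hwg : Integrable (fun ω => w ω • g ω) μ)
    (hwf : Integrable (fun ω => |w ω - c| * ‖f ω‖) μ)
    (hw : ∀ᵐ ω ∂μ, 0 ≤ w ω) (hg : ∀ᵐ ω ∂μ, ‖g ω - f ω‖ ≤ η * ‖f ω‖) :
    ‖∫ ω, w ω • g ω ∂μ - c • ∫ ω, f ω ∂μ‖ ≤
      (1 + η) * ∫ ω, |w ω - c| * ‖f ω‖ ∂μ + η * c * ∫ ω, ‖f ω‖ ∂μ := by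
  have hbound : Integrable (fun ω => (1 + η) * (|w ω - c| * ‖f ω‖) + η * c * ‖f ω‖) μ :=
    (hwf.const_mul _).add (hf.norm.const_mul _)
  calc ‖∫ ω, w ω • g ω ∂μ - c • ∫ ω, f ω ∂μ‖
      = ‖∫ ω, (w ω • g ω - c • f ω) ∂μ‖ := by
        rw [← integral_smul, ← integral_sub (g := fun ω => c • f ω) hwg (hf.smul c)]
    _ ≤ ∫ ω, ‖w ω • g ω - c • f ω‖ ∂μ := norm_integral_le_integral_norm _
    _ ≤ ∫ ω, ((1 + η) * (|w ω - c| * ‖f ω‖) + η * c * ‖f ω‖) ∂μ := by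
        refine integral_mono_of_nonneg (.of_forall fun _ => norm_nonneg _) hbound ?_
        filter_upwards [hw, hg] with ω hwω hgω
        exact norm_smul_sub_smul_le_of_norm_sub_le hwω hgω
    _ = (1 + η) * ∫ ω, |w ω - c| * ‖f ω‖ ∂μ + η * c * ∫ ω, ‖f ω‖ ∂μ := by
        rw [integral_add (hwf.const_mul _) (hf.norm.const_mul _), integral_const_mul,
          integral_const_mul]

end

theorem fspo_norm_inequality_general
    {Ω : Type*} [MeasurableSpace Ω] (P : Measure Ω)
    {E : Type*} [NormedAddCommGroup E] [InnerProductSpace ℝ E]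
    (L : Ω → ℕ) (gstar gb : ℕ → E) (q : ℕ → ℝ)
    (hq : ∀ l, q l ∈ Set.Icc (0 : ℝ) 1)
    (hint_q : Integrable (fun ω => q (L ω)) P)
    (hint_gstar : Integrable (fun ω => gstar (L ω)) P)
    (hint_gb : Integrable (fun ω => q (L ω) • gb (L ω)) P)
    (qbar : ℝ) (hqbar_pos : 0 < qbar)
    (gS : E) (hgS_def : gS = ∫ ω, gstar (L ω) ∂P)
    (gB : E) (hgB_def : gB = ∫ ω, q (L ω) • gb (L ω) ∂P)
    (LRE : ℝ) (hLRE_def : LRE = (1 / 2) * ∫ ω, |q (L ω) / qbar - 1| ∂P)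
    (η : ℝ) (hη0 : 0 ≤ η)
    (hstrat : ∀ l, ‖gb l - gstar l‖ ≤ η * ‖gstar l‖)
    (γ : ℝ)
    (hcorr : ∫ ω, |q (L ω) - qbar| * ‖gstar (L ω)‖ ∂P
        ≤ γ * (∫ ω, |q (L ω) - qbar| ∂P) * ∫ ω, ‖gstar (L ω)‖ ∂P) :
    ‖gB - qbar • gS‖ ≤ qbar * (2 * γ * (1 + η) * LRE + η) * ∫ ω, ‖gstar (L ω)‖ ∂P := by
  have hmean_dev : ∫ ω, |q (L ω) - qbar| ∂P = 2 * qbar * LRE := by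
    rw [hLRE_def, integral_abs_div_sub_one hqbar_pos.ne', abs_of_pos hqbar_pos]
    field_simp
  have hq_bdd : ∀ᵐ ω ∂P, |q (L ω)| ≤ 1 :=
    .of_forall fun ω => abs_le.mpr ⟨by linarith [(hq (L ω)).1], (hq (L ω)).2⟩
  have hprod := hint_gstar.abs_sub_const_mul_norm hint_q.aestronglyMeasurable hq_bdd qbar
  calc ‖gB - qbar • gS‖
      ≤ (1 + η) * ∫ ω, |q (L ω) - qbar| * ‖gstar (L ω)‖ ∂P
          + η * qbar * ∫ ω, ‖gstar (L ω)‖ ∂P := by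
        rw [hgB_def, hgS_def]
        exact norm_integral_smul_sub_smul_integral_le hint_gstar hint_gb hprod
          (.of_forall fun ω => (hq (L ω)).1) (.of_forall fun ω => hstrat (L ω))
    _ ≤ (1 + η) * (γ * (∫ ω, |q (L ω) - qbar| ∂P) * ∫ ω, ‖gstar (L ω)‖ ∂P)
          + η * qbar * ∫ ω, ‖gstar (L ω)‖ ∂P := by
        gcongr
    _ = qbar * (2 * γ * (1 + η) * LRE + η) * ∫ ω, ‖gstar (L ω)‖ ∂P := by
        rw [hmean_dev]; ring

/-- **Key norm inequality** from the proof of Theorem 2.1: the clipped surrogate update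
`g_b = E[q(L) • gb(L)]` deviates from the rescaled true update `q̄ • g⋆` by at most
`q̄·(2γ(1+η)·LRE + η)·E[‖gstar(L)‖]`, under bounded stratification and bounded
correlation, where `LRE = ½·E[|q(L)/q̄ − 1|]`. -/
theorem fspo_norm_inequality
    {Ω : Type*} [MeasurableSpace Ω] (P : Measure Ω) [IsProbabilityMeasure P]
    {E : Type*} [NormedAddCommGroup E] [InnerProductSpace ℝ E] [CompleteSpace E]
    (L : Ω → ℕ) (gstar gb : ℕ → E) (q : ℕ → ℝ)
    (hq : ∀ l, q l ∈ Set.Icc (0 : ℝ) 1)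
    (hint_q : Integrable (fun ω => q (L ω)) P)
    (hint_gstar : Integrable (fun ω => gstar (L ω)) P)
    (hint_gstar_norm : Integrable (fun ω => ‖gstar (L ω)‖) P)
    (hint_gb : Integrable (fun ω => q (L ω) • gb (L ω)) P)
    (qbar : ℝ) (hqbar_def : qbar = ∫ ω, q (L ω) ∂P) (hqbar_pos : 0 < qbar)
    (gS : E) (hgS_def : gS = ∫ ω, gstar (L ω) ∂P)
    (gB : E) (hgB_def : gB = ∫ ω, q (L ω) • gb (L ω) ∂P)
    (LRE : ℝ) (hLRE_def : LRE = (1 / 2) * ∫ ω, |q (L ω) / qbar - 1| ∂P)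
    (η : ℝ) (hη0 : 0 ≤ η) (hη1 : η < 1)
    (hstrat : ∀ l, ‖gb l - gstar l‖ ≤ η * ‖gstar l‖)
    (γ : ℝ)
    (hcorr : ∫ ω, |q (L ω) - qbar| * ‖gstar (L ω)‖ ∂P
        ≤ γ * (∫ ω, |q (L ω) - qbar| ∂P) * ∫ ω, ‖gstar (L ω)‖ ∂P) :
    ‖gB - qbar • gS‖ ≤ qbar * (2 * γ * (1 + η) * LRE + η) * ∫ ω, ‖gstar (L ω)‖ ∂P :=
  fspo_norm_inequality_general P L gstar gb q hq hint_q hint_gstar hint_gb qbar hqbar_pos gS hgS_def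
    gB hgB_def LRE hLRE_def η hη0 hstrat γ hcorr
end

section
/- Let S and A be finite nonempty types (states and actions), let P(·|s,a) be a transition kernel giving a probability mass function on S for each state–action pair, let r : S × A → ℝ be a reward function, let ρ be an initial state distribution, and let γ ∈ [0,1) be a discount factor. For a stationary policy π (a probability mass function on A for each state), let J(π) = E_{τ∼π}[Σ_{t≥0} γᵗ·r(s_t, a_t)] denote the expected discounted return of the trajectory distribution induced by ρ, π, and P, and let A^π(s,a) = Q^π(s,a) − V^π(s) denote the advantage function of π. Then for any two stationary policies π and π′: J(π) − J(π′) = E_{τ∼π}[ Σ_{t≥0} γᵗ·A^{π′}(s_t, a_t) ], where the trajectory τ is drawn by following π. -/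
/-!
Write `V'` for the value function of `π'`. Since `Q' = r + γ P V'`, the `π`-expected advantage at
time `t` is the expected reward plus `γ E[V'(s_{t+1})] - E[V'(s_t)]`; after discounting, the `V'`
terms telescope to `-E_ρ[V'(s_0)]`, and `E_ρ[V'(s_0)] = J(π')` because the return is linear in the
initial distribution. All series converge absolutely: stochastic kernels do not increase the `ℓ¹`
norm of the state distributions, so the discounted terms are dominated by a geometric series.
-/

/-- One step of the state-distribution evolution: starting from state distribution `d`,
act with policy `pol` and transition with kernel `Pk`. -/
noncomputable def stepDist {S A : Type*} [Fintype S] [Fintype A]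
    (Pk : S → A → S → ℝ) (pol : S → A → ℝ) (d : S → ℝ) : S → ℝ :=
  fun s' => ∑ s, ∑ a, d s * pol s a * Pk s a s'

/-- The state distribution at time `t` of the trajectory induced by the initial
distribution `ρ`, the policy `pol` and the transition kernel `Pk`. -/
noncomputable def stateDist {S A : Type*} [Fintype S] [Fintype A]
    (Pk : S → A → S → ℝ) (pol : S → A → ℝ) (ρ : S → ℝ) (t : ℕ) : S → ℝ :=
  (stepDist Pk pol)^[t] ρ

/-- The expected discounted return `J(π) = E_{τ∼π}[Σ_{t≥0} γᵗ·r(s_t, a_t)]` of the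
trajectory distribution induced by `ρ`, `pol` and `Pk`. -/
noncomputable def expReturn {S A : Type*} [Fintype S] [Fintype A]
    (Pk : S → A → S → ℝ) (r : S → A → ℝ) (γ : ℝ) (pol : S → A → ℝ) (ρ : S → ℝ) : ℝ :=
  ∑' t : ℕ, γ ^ t * ∑ s, ∑ a, stateDist Pk pol ρ t s * pol s a * r s a

/-- The state value function `V^π(s)`: expected discounted return starting from `s`. -/
noncomputable def vFun {S A : Type*} [Fintype S] [Fintype A] [DecidableEq S]
    (Pk : S → A → S → ℝ) (r : S → A → ℝ) (γ : ℝ) (pol : S → A → ℝ) (s : S) : ℝ :=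
  expReturn Pk r γ pol (fun s0 => if s0 = s then 1 else 0)

/-- The state–action value function `Q^π(s,a)`. -/
noncomputable def qFun {S A : Type*} [Fintype S] [Fintype A] [DecidableEq S]
    (Pk : S → A → S → ℝ) (r : S → A → ℝ) (γ : ℝ) (pol : S → A → ℝ) (s : S) (a : A) : ℝ :=
  r s a + γ * ∑ s', Pk s a s' * vFun Pk r γ pol s'

/-- The advantage function `A^π(s,a) = Q^π(s,a) − V^π(s)`. -/
noncomputable def advFun {S A : Type*} [Fintype S] [Fintype A] [DecidableEq S]
    (Pk : S → A → S → ℝ) (r : S → A → ℝ) (γ : ℝ) (pol : S → A → ℝ) (s : S) (a : A) : ℝ :=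
  qFun Pk r γ pol s a - vFun Pk r γ pol s

open Finset

structure IsStochastic {ι κ : Type*} [Fintype κ] (P : ι → κ → ℝ) : Prop where
  nonneg : ∀ i j, 0 ≤ P i j
  sum_eq_one : ∀ i, ∑ j, P i j = 1

theorem hasSum_sub_succ {G : Type*} [AddCommGroup G] [TopologicalSpace G]
    [IsTopologicalAddGroup G] {g : ℕ → G} (hg : Summable g) :
    HasSum (fun t => g (t + 1) - g t) (-g 0) := by
  have hshift : HasSum (fun t => g (t + 1)) (∑' t, g t - g 0) := by
    simpa using (hasSum_nat_add_iff' 1).2 hg.hasSum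
  simpa using hshift.sub hg.hasSum

section StateDist

variable {S A : Type*} [Fintype S] [Fintype A] (Pk : S → A → S → ℝ) (pol : S → A → ℝ)

theorem stateDist_zero (ρ : S → ℝ) : stateDist Pk pol ρ 0 = ρ := rfl

theorem stateDist_succ (ρ : S → ℝ) (t : ℕ) :
    stateDist Pk pol ρ (t + 1) = stepDist Pk pol (stateDist Pk pol ρ t) :=
  Function.iterate_succ_apply' _ _ _

noncomputable def stepDistLinearMap : Module.End ℝ (S → ℝ) where
  toFun := stepDist Pk pol
  map_add' d e := by
    ext s'
    simp only [stepDist, Pi.add_apply, add_mul, sum_add_distrib]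
  map_smul' c d := by
    ext s'
    simp only [stepDist, Pi.smul_apply, smul_eq_mul, mul_sum, mul_assoc, RingHom.id_apply]

theorem stateDist_eq_sum_smul [DecidableEq S] (ρ : S → ℝ) (t : ℕ) :
    stateDist Pk pol ρ t = ∑ s₀, ρ s₀ • stateDist Pk pol (fun s => if s = s₀ then 1 else 0) t := by
  have hpow : ∀ d, stateDist Pk pol d t = (stepDistLinearMap Pk pol ^ t) d := fun d => by
    rw [Module.End.pow_apply]; rfl
  have hsingle : ∀ s₀ : S, (fun s => if s = s₀ then (1 : ℝ) else 0) = Pi.single s₀ 1 :=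
    fun s₀ => funext fun s => (Pi.single_apply s₀ 1 s).symm
  simp only [hpow, hsingle, ← map_smul, ← map_sum, ← pi_eq_sum_univ']

theorem sum_stepDist_mul (d v : S → ℝ) :
    ∑ s', stepDist Pk pol d s' * v s' = ∑ s, ∑ a, d s * pol s a * ∑ s', Pk s a s' * v s' := by
  simp only [stepDist, sum_mul, mul_sum, mul_assoc]
  rw [sum_comm]
  exact sum_congr rfl fun s _ => sum_comm

variable {Pk pol}

theorem sum_sum_mul_policy (hpol : ∀ s, ∑ a, pol s a = 1) (d v : S → ℝ) :
    ∑ s, ∑ a, d s * pol s a * v s = ∑ s, d s * v s := by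
  refine sum_congr rfl fun s _ => ?_
  rw [← sum_mul, ← mul_sum, hpol, mul_one]

theorem sum_abs_stepDist_le (hPk : ∀ s, IsStochastic (Pk s)) (hpol : IsStochastic pol)
    (d : S → ℝ) : ∑ s', |stepDist Pk pol d s'| ≤ ∑ s, |d s| :=
  calc ∑ s', |stepDist Pk pol d s'|
      ≤ ∑ s', ∑ s, ∑ a, |d s| * pol s a * Pk s a s' := by
        refine sum_le_sum fun s' _ => (abs_sum_le_sum_abs _ _).trans <|
          sum_le_sum fun s _ => (abs_sum_le_sum_abs _ _).trans <| le_of_eq <|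
          sum_congr rfl fun a _ => ?_
        rw [abs_mul, abs_mul, abs_of_nonneg (hpol.nonneg s a), abs_of_nonneg ((hPk s).nonneg a s')]
    _ = ∑ s, ∑ a, |d s| * pol s a * ∑ s', Pk s a s' := by
        simp only [mul_sum]
        rw [sum_comm]
        exact sum_congr rfl fun _ _ => sum_comm
    _ = ∑ s, |d s| := by
        simpa [(hPk _).sum_eq_one] using sum_sum_mul_policy hpol.sum_eq_one (fun s => |d s|) 1

theorem sum_abs_stateDist_le (hPk : ∀ s, IsStochastic (Pk s)) (hpol : IsStochastic pol)
    (ρ : S → ℝ) (t : ℕ) : ∑ s, |stateDist Pk pol ρ t s| ≤ ∑ s, |ρ s| := by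
  induction t with
  | zero => rfl
  | succ t ih => exact (stateDist_succ Pk pol ρ t ▸ sum_abs_stepDist_le hPk hpol _).trans ih

theorem abs_sum_sum_mul_le (hpol : IsStochastic pol) (d : S → ℝ) {f : S → A → ℝ} {M : ℝ}
    (hf : ∀ s a, |f s a| ≤ M) :
    |∑ s, ∑ a, d s * pol s a * f s a| ≤ (∑ s, |d s|) * M :=
  calc |∑ s, ∑ a, d s * pol s a * f s a|
      ≤ ∑ s, ∑ a, |d s| * pol s a * M := by
        refine (abs_sum_le_sum_abs _ _).trans <| sum_le_sum fun s _ =>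
          (abs_sum_le_sum_abs _ _).trans <| sum_le_sum fun a _ => ?_
        rw [abs_mul, abs_mul, abs_of_nonneg (hpol.nonneg s a)]
        exact mul_le_mul_of_nonneg_left (hf s a) (mul_nonneg (abs_nonneg _) (hpol.nonneg s a))
    _ = (∑ s, |d s|) * M := by
        rw [sum_sum_mul_policy hpol.sum_eq_one (fun s => |d s|) (fun _ => M), sum_mul]

theorem summable_discounted_sum (hPk : ∀ s, IsStochastic (Pk s)) (hpol : IsStochastic pol)
    {γ : ℝ} (hγ0 : 0 ≤ γ) (hγ1 : γ < 1) (ρ : S → ℝ) (f : S → A → ℝ) :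
    Summable fun t => γ ^ t * ∑ s, ∑ a, stateDist Pk pol ρ t s * pol s a * f s a := by
  set M := ∑ s, ∑ a, |f s a|
  have hM : 0 ≤ M := sum_nonneg fun _ _ => sum_nonneg fun _ _ => abs_nonneg _
  have hf : ∀ s a, |f s a| ≤ M := fun s a =>
    (single_le_sum (f := fun a => |f s a|) (fun _ _ => abs_nonneg _) (mem_univ a)).trans <|
      single_le_sum (f := fun s => ∑ a, |f s a|)
        (fun _ _ => sum_nonneg fun _ _ => abs_nonneg _) (mem_univ s)
  refine Summable.of_norm_bounded
    ((summable_geometric_of_lt_one hγ0 hγ1).mul_left ((∑ s, |ρ s|) * M)) fun t => ?_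
  rw [Real.norm_eq_abs, abs_mul, abs_pow, abs_of_nonneg hγ0, mul_comm]
  gcongr
  exact (abs_sum_sum_mul_le hpol _ hf).trans <|
    mul_le_mul_of_nonneg_right (sum_abs_stateDist_le hPk hpol ρ t) hM

end StateDist

section ValueFunctions

variable {S A : Type*} [Fintype S] [Fintype A] [DecidableEq S]
  {Pk : S → A → S → ℝ} {pol : S → A → ℝ} {r : S → A → ℝ} {γ : ℝ}

theorem expReturn_eq_sum_vFun (hPk : ∀ s, IsStochastic (Pk s)) (hpol : IsStochastic pol)
    (hγ0 : 0 ≤ γ) (hγ1 : γ < 1) (ρ : S → ℝ) :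
    expReturn Pk r γ pol ρ = ∑ s₀, ρ s₀ * vFun Pk r γ pol s₀ := by
  have hlin : ∀ t, γ ^ t * ∑ s, ∑ a, stateDist Pk pol ρ t s * pol s a * r s a
      = ∑ s₀, ρ s₀ * (γ ^ t * ∑ s, ∑ a,
          stateDist Pk pol (fun s => if s = s₀ then 1 else 0) t s * pol s a * r s a) := by
    intro t
    simp only [stateDist_eq_sum_smul Pk pol ρ t, Finset.sum_apply, Pi.smul_apply, smul_eq_mul,
      sum_mul, mul_sum]
    refine ((sum_congr rfl fun s _ => sum_comm).trans sum_comm).trans <|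
      sum_congr rfl fun s₀ _ => sum_congr rfl fun s _ => sum_congr rfl fun a _ => by ring
  unfold expReturn
  rw [tsum_congr hlin, Summable.tsum_finsetSum fun s₀ _ =>
    (summable_discounted_sum hPk hpol hγ0 hγ1 _ r).mul_left (ρ s₀)]
  simp only [tsum_mul_left]
  rfl

theorem sum_sum_mul_advFun (pol' : S → A → ℝ) (hpol : ∀ s, ∑ a, pol s a = 1) (d : S → ℝ) :
    ∑ s, ∑ a, d s * pol s a * advFun Pk r γ pol' s a
      = ∑ s, ∑ a, d s * pol s a * r s a
        + γ * ∑ s, stepDist Pk pol d s * vFun Pk r γ pol' s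
        - ∑ s, d s * vFun Pk r γ pol' s := by
  rw [sum_stepDist_mul, ← sum_sum_mul_policy hpol d]
  simp only [advFun, qFun, mul_sub, mul_add, sum_sub_distrib, sum_add_distrib, mul_sum]
  congr 2
  exact sum_congr rfl fun s _ => sum_congr rfl fun a _ => sum_congr rfl fun s' _ => by ring

end ValueFunctions

theorem performance_difference_general
    {S A : Type*} [Fintype S] [Fintype A] [DecidableEq S]
    (Pk : S → A → S → ℝ) (hPk0 : ∀ s a s', 0 ≤ Pk s a s') (hPk1 : ∀ s a, ∑ s', Pk s a s' = 1)
    (r : S → A → ℝ)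
    (ρ : S → ℝ)
    (γ : ℝ) (hγ0 : 0 ≤ γ) (hγ1 : γ < 1)
    (pol pol' : S → A → ℝ)
    (hpol0 : ∀ s a, 0 ≤ pol s a) (hpol1 : ∀ s, ∑ a, pol s a = 1)
    (hpol'0 : ∀ s a, 0 ≤ pol' s a) (hpol'1 : ∀ s, ∑ a, pol' s a = 1) :
    expReturn Pk r γ pol ρ - expReturn Pk r γ pol' ρ
      = ∑' t : ℕ, γ ^ t * ∑ s, ∑ a,
          stateDist Pk pol ρ t s * pol s a * advFun Pk r γ pol' s a := by
  have hPk : ∀ s, IsStochastic (Pk s) := fun s => ⟨hPk0 s, hPk1 s⟩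
  have hpol : IsStochastic pol := ⟨hpol0, hpol1⟩
  set W : ℕ → ℝ := fun t => γ ^ t * ∑ s, stateDist Pk pol ρ t s * vFun Pk r γ pol' s
  have hW : Summable W := by
    simpa only [sum_sum_mul_policy hpol1] using
      summable_discounted_sum hPk hpol hγ0 hγ1 ρ fun s _ => vFun Pk r γ pol' s
  have hterm : ∀ t, γ ^ t * ∑ s, ∑ a, stateDist Pk pol ρ t s * pol s a * advFun Pk r γ pol' s a
      = γ ^ t * ∑ s, ∑ a, stateDist Pk pol ρ t s * pol s a * r s a + (W (t + 1) - W t) := by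
    intro t
    rw [sum_sum_mul_advFun pol' hpol1, ← stateDist_succ]
    simp only [W, pow_succ]
    ring
  rw [tsum_congr hterm, expReturn_eq_sum_vFun hPk ⟨hpol'0, hpol'1⟩ hγ0 hγ1 ρ,
    ((summable_discounted_sum hPk hpol hγ0 hγ1 ρ r).hasSum.add (hasSum_sub_succ hW)).tsum_eq]
  simp [W, stateDist_zero, expReturn, sub_eq_add_neg]

/-- **Performance difference identity** (Equation (8), Appendix B of the paper; due to
Kakade–Langford/TRPO): for finite state and action spaces, any transition kernel,
reward, initial distribution, discount `γ ∈ [0,1)`, and any two stationary policies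
`π` and `π′`, `J(π) − J(π′) = E_{τ∼π}[Σ_{t≥0} γᵗ·A^{π′}(s_t, a_t)]`, where the
trajectory `τ` is drawn by following `π`. -/
theorem performance_difference
    {S A : Type*} [Fintype S] [Fintype A] [Nonempty S] [Nonempty A] [DecidableEq S]
    (Pk : S → A → S → ℝ) (hPk0 : ∀ s a s', 0 ≤ Pk s a s') (hPk1 : ∀ s a, ∑ s', Pk s a s' = 1)
    (r : S → A → ℝ)
    (ρ : S → ℝ) (hρ0 : ∀ s, 0 ≤ ρ s) (hρ1 : ∑ s, ρ s = 1)
    (γ : ℝ) (hγ0 : 0 ≤ γ) (hγ1 : γ < 1)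
    (pol pol' : S → A → ℝ)
    (hpol0 : ∀ s a, 0 ≤ pol s a) (hpol1 : ∀ s, ∑ a, pol s a = 1)
    (hpol'0 : ∀ s a, 0 ≤ pol' s a) (hpol'1 : ∀ s, ∑ a, pol' s a = 1) :
    expReturn Pk r γ pol ρ - expReturn Pk r γ pol' ρ
      = ∑' t : ℕ, γ ^ t * ∑ s, ∑ a,
          stateDist Pk pol ρ t s * pol s a * advFun Pk r γ pol' s a :=
  performance_difference_general Pk hPk0 hPk1 r ρ γ hγ0 hγ1 pol pol' hpol0 hpol1 hpol'0 hpol'1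
end
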